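/- arXiv:2510.13472 — 2 statements merged into one kernel-verified Lean document; each statement's English description precedes it below -/
import Mathlib

section
/- For the Fibonacci sequence Fₙ, lim_{n→∞} [ (∑_{k=n}^∞ 1/F_k²)^{-1} − (F_n² − F_{n−1}² + (2/3)(−1)ⁿ) ] = 0. -/
/-!
Write `q = ψ² = φ⁻²` with `ψ = (1 - √5) / 2`. Binet's formula gives
`1 / F_m² = 5 qᵐ / (1 - (-q)ᵐ)² = 5 qᵐ + 10 (-q²)ᵐ + O(q³ᵐ)`, so, summing two geometric
series, the tail `T_n = ∑_{k ≥ n} 1 / F_k²` is `5 qⁿ / (1 - q) + 10 (-q²)ⁿ / (1 + q²) + O(q³ⁿ)`.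
Binet's formula also writes `a_n = F_n² - F_{n-1}² + (2/3)(-1)ⁿ` exactly in terms of `qⁿ` and
`(-q)ⁿ`, and the identities `(1 - q)² = q`, `1 + q² = 3q` make the first-order terms of
`1 - a_n T_n` cancel: `1 - a_n T_n = O(q²ⁿ)`. As `T_n ≥ qⁿ`, this gives
`T_n⁻¹ - a_n = (1 - a_n T_n) / T_n = O(qⁿ)`.
-/

open Real goldenRatio Filter Topology

theorem abs_inv_one_sub_sq_sub_le {u : ℝ} (hu : |u| ≤ 1 / 2) :
    |((1 - u) ^ 2)⁻¹ - (1 + 2 * u)| ≤ 16 * u ^ 2 := by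
  obtain ⟨hu₁, hu₂⟩ := abs_le.mp hu
  have hne : 1 - u ≠ 0 := by linarith
  have hpos : 0 < (1 - u) ^ 2 := by positivity
  have hexpand : ((1 - u) ^ 2)⁻¹ - (1 + 2 * u) = u ^ 2 * (3 - 2 * u) / (1 - u) ^ 2 := by
    field_simp; ring
  rw [hexpand, abs_div, abs_of_pos hpos, div_le_iff₀ hpos, abs_mul, abs_of_nonneg (sq_nonneg u),
    abs_of_pos (by linarith)]
  nlinarith [sq_nonneg u, mul_nonneg (sq_nonneg u) (by linarith : (0:ℝ) ≤ 1/2 - u)]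

theorem summable_of_abs_sub_le_geometric {f g : ℕ → ℝ} {C r : ℝ} (hr₀ : 0 ≤ r) (hr₁ : r < 1)
    (hg : Summable g) (h : ∀ k, |f k - g k| ≤ C * r ^ k) : Summable f := by
  have hdiff : Summable (fun k => f k - g k) :=
    ((summable_geometric_of_lt_one hr₀ hr₁).mul_left C).of_norm_bounded h
  simpa using hdiff.add hg

theorem abs_tsum_sub_tsum_le_of_abs_sub_le_geometric {f g : ℕ → ℝ} {C r : ℝ} (hr₀ : 0 ≤ r)
    (hr₁ : r < 1) (hg : Summable g) (h : ∀ k, |f k - g k| ≤ C * r ^ k) :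
    |∑' k, f k - ∑' k, g k| ≤ C * (1 - r)⁻¹ := by
  rw [← (summable_of_abs_sub_le_geometric hr₀ hr₁ hg h).tsum_sub hg]
  exact tsum_of_norm_bounded (f := fun k => f k - g k)
    ((hasSum_geometric_of_lt_one hr₀ hr₁).mul_left C) h

theorem abs_inv_sub_le_of_abs_one_sub_mul_le {T a y C : ℝ} (hy : 0 < y) (hyT : y ≤ T)
    (h : |1 - a * T| ≤ C * y ^ 2) : |T⁻¹ - a| ≤ C * y := by
  have hT : 0 < T := hy.trans_le hyT
  have hC : 0 ≤ C := nonneg_of_mul_nonneg_left ((abs_nonneg _).trans h) (by positivity)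
  calc |T⁻¹ - a| = |1 - a * T| / T := by
        rw [← abs_of_pos hT, ← abs_div, abs_of_pos hT]; congr 1; field_simp
    _ ≤ C * y ^ 2 / y := by gcongr
    _ = C * y := by field_simp

namespace FibReciprocal

noncomputable def q : ℝ := ψ ^ 2

theorem q_eq : q = ψ + 1 := goldenConj_sq

theorem one_third_lt_q : 1 / 3 < q := by
  rw [q_eq, goldenConj]
  nlinarith [Real.sq_sqrt (show (0:ℝ) ≤ 5 by norm_num), Real.sqrt_nonneg 5]

theorem q_lt_half : q < 1 / 2 := by
  rw [q_eq, goldenConj]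
  nlinarith [Real.sq_sqrt (show (0:ℝ) ≤ 5 by norm_num), Real.sqrt_nonneg 5]

theorem q_pos : 0 < q := by linarith [one_third_lt_q]

theorem q_lt_one : q < 1 := by linarith [q_lt_half]

theorem one_sub_q_sq : (1 - q) ^ 2 = q := by
  rw [q_eq]; linear_combination goldenConj_sq

theorem one_add_q_sq : 1 + q ^ 2 = 3 * q := by
  rw [q_eq]; linear_combination goldenConj_sq

theorem fib_sq_eq (m : ℕ) : (Nat.fib m : ℝ) ^ 2 = (1 - (-q) ^ m) ^ 2 / (5 * q ^ m) := by
  have hφ : φ = -ψ⁻¹ := by rw [inv_goldenConj, neg_neg]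
  rw [coe_fib_eq, hφ, q, neg_pow, neg_pow (ψ ^ 2), inv_pow, ← pow_mul, div_pow,
    sq_sqrt (by norm_num : (0:ℝ) ≤ 5)]
  have hψ := goldenConj_ne_zero
  have hsign : ((-1 : ℝ) ^ m) ^ 2 = 1 := by rw [← pow_mul, pow_mul']; simp
  field_simp
  linear_combination (ψ ^ (2 * m) - ψ ^ (6 * m)) * hsign

theorem abs_neg_q_pow_le_half {m : ℕ} (hm : m ≠ 0) : |(-q) ^ m| ≤ 1 / 2 := by
  rw [abs_pow, abs_neg, abs_of_pos q_pos]
  exact (pow_le_of_le_one q_pos.le q_lt_one.le hm).trans q_lt_half.le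

theorem abs_one_div_fib_sq_sub_le (m : ℕ) :
    |1 / (Nat.fib m : ℝ) ^ 2 - (5 * q ^ m + 10 * (-q ^ 2) ^ m)| ≤ 80 * (q ^ 3) ^ m := by
  rcases eq_or_ne m 0 with rfl | hm
  · norm_num -- `1 / 0 = 0`, so the left side is `15`
  set u := (-q) ^ m
  have hu_sq : u ^ 2 = (q ^ 2) ^ m := by rw [← pow_mul, mul_comm, pow_mul, neg_sq]
  have hexpand : 1 / (Nat.fib m : ℝ) ^ 2 - (5 * q ^ m + 10 * (-q ^ 2) ^ m)
      = 5 * q ^ m * (((1 - u) ^ 2)⁻¹ - (1 + 2 * u)) := by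
    have hq := q_pos
    rw [fib_sq_eq, show -q ^ 2 = q * -q by ring, mul_pow]
    field_simp
    ring
  calc _ = 5 * q ^ m * |((1 - u) ^ 2)⁻¹ - (1 + 2 * u)| := by
        rw [hexpand, abs_mul, abs_of_pos (mul_pos (by norm_num) (pow_pos q_pos m))]
    _ ≤ 5 * q ^ m * (16 * u ^ 2) := by
        gcongr
        · exact (mul_pos (by norm_num) (pow_pos q_pos m)).le
        · exact abs_inv_one_sub_sq_sub_le (abs_neg_q_pow_le_half hm)
    _ = 80 * (q ^ 3) ^ m := by rw [hu_sq]; ring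

theorem pow_le_one_div_fib_sq {n : ℕ} (hn : n ≠ 0) : q ^ n ≤ 1 / (Nat.fib n : ℝ) ^ 2 := by
  obtain ⟨h₁, h₂⟩ := abs_le.mp (abs_neg_q_pow_le_half hn)
  have hpos : 0 < (1 - (-q) ^ n) ^ 2 := by nlinarith
  have hle : (1 - (-q) ^ n) ^ 2 ≤ 5 := by nlinarith
  rw [fib_sq_eq, one_div_div, le_div_iff₀ hpos]
  nlinarith [mul_le_mul_of_nonneg_left hle (pow_pos q_pos n).le]

noncomputable def mainTerm (y z : ℝ) : ℝ := 5 * y / (1 - q) + 10 * (y * z) / (1 + q ^ 2)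

theorem hasSum_mainTerm (n : ℕ) :
    HasSum (fun k => 5 * q ^ (n + k) + 10 * (-q ^ 2) ^ (n + k)) (mainTerm (q ^ n) ((-q) ^ n)) := by
  have hq := q_pos
  have h₁ := (hasSum_geometric_of_lt_one hq.le q_lt_one).mul_left (5 * q ^ n)
  have h₂ := (hasSum_geometric_of_abs_lt_one (r := -q ^ 2)
    (by rw [abs_neg, abs_of_pos (by positivity)]; nlinarith [q_lt_half])).mul_left
      (10 * (-q ^ 2) ^ n)
  rw [mainTerm, ← mul_pow, show q * -q = -q ^ 2 by ring]
  simp_rw [pow_add, ← mul_assoc, div_eq_mul_inv, ← sub_neg_eq_add 1 (q ^ 2)]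
  exact h₁.add h₂

theorem q_cube_lt_one : q ^ 3 < 1 :=
  pow_lt_one₀ q_pos.le q_lt_one (by norm_num)

theorem abs_one_div_fib_sq_add_sub_le (n k : ℕ) :
    |1 / (Nat.fib (n + k) : ℝ) ^ 2 - (5 * q ^ (n + k) + 10 * (-q ^ 2) ^ (n + k))|
      ≤ 80 * (q ^ 3) ^ n * (q ^ 3) ^ k := by
  simpa only [pow_add, mul_assoc] using abs_one_div_fib_sq_sub_le (n + k)

noncomputable def sqTail (n : ℕ) : ℝ := ∑' k : ℕ, 1 / (Nat.fib (n + k) : ℝ) ^ 2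

theorem abs_sqTail_sub_mainTerm_le (n : ℕ) :
    |sqTail n - mainTerm (q ^ n) ((-q) ^ n)| ≤ 80 * (1 - q ^ 3)⁻¹ * (q ^ n) ^ 3 := by
  rw [sqTail, ← (hasSum_mainTerm n).tsum_eq]
  refine (abs_tsum_sub_tsum_le_of_abs_sub_le_geometric ((pow_pos q_pos 3).le) q_cube_lt_one
    (hasSum_mainTerm n).summable (abs_one_div_fib_sq_add_sub_le n)).trans_eq ?_
  ring

theorem one_div_fib_sq_le_sqTail (n : ℕ) : 1 / (Nat.fib n : ℝ) ^ 2 ≤ sqTail n := by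
  have hsummable : Summable (fun k => 1 / (Nat.fib (n + k) : ℝ) ^ 2) :=
    summable_of_abs_sub_le_geometric ((pow_pos q_pos 3).le) q_cube_lt_one
      (hasSum_mainTerm n).summable (abs_one_div_fib_sq_add_sub_le n)
  exact hsummable.le_tsum 0 (fun _ _ => by positivity)

noncomputable def approxInv (y z : ℝ) : ℝ :=
  ((1 - q) - 2 / 3 * z - (1 - q) * y ^ 2 / q) / (5 * y)

theorem fib_sq_sub_fib_pred_sq_add_eq_approxInv {n : ℕ} (hn : n ≠ 0) :
    (Nat.fib n : ℝ) ^ 2 - (Nat.fib (n - 1) : ℝ) ^ 2 + 2 / 3 * (-1) ^ n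
      = approxInv (q ^ n) ((-q) ^ n) := by
  obtain ⟨m, rfl⟩ := Nat.exists_eq_add_one_of_ne_zero hn
  have hq := q_pos
  have hY : 0 < q ^ m := pow_pos hq m
  have hsign : (-1 : ℝ) ^ (m + 1) = -(-q) ^ m / q ^ m := by
    rw [neg_pow q, pow_succ]; field_simp
  have hu : ((-q) ^ m) ^ 2 = (q ^ m) ^ 2 := by
    rw [← pow_mul, ← pow_mul, pow_mul', neg_sq, pow_mul']
  rw [Nat.add_sub_cancel, fib_sq_eq, fib_sq_eq, hsign, approxInv, pow_succ, pow_succ]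
  field_simp
  linear_combination 3 * q ^ 2 * q ^ m * (q - 1) * hu

theorem one_sub_approxInv_mul_mainTerm {y z : ℝ} (hy : y ≠ 0) (hz : z ^ 2 = y ^ 2) :
    1 - approxInv y z * mainTerm y z = y ^ 2 * (13 / (9 * q) + 2 * (1 - q) * z / (3 * q ^ 2)) := by
  have hq : q ≠ 0 := q_pos.ne'
  have hq' : 1 - q ≠ 0 := (sub_pos.2 q_lt_one).ne'
  have hmain : mainTerm y z = 5 * y * (1 - q) / q + 10 * y * z / (3 * q) := by
    rw [mainTerm, one_add_q_sq]
    field_simp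
    linear_combination (-15) * one_sub_q_sq
  rw [hmain, approxInv]
  field_simp
  linear_combination (405 * (y ^ 2 - q)) * one_sub_q_sq + 180 * q * hz

theorem abs_one_sub_approxInv_mul_mainTerm_le {y z : ℝ} (hy₀ : 0 < y) (hy₁ : y ≤ 1)
    (hz : |z| = y) : |1 - approxInv y z * mainTerm y z| ≤ 9 * y ^ 2 := by
  have hq₀ := q_pos
  have hq₁ := one_third_lt_q
  have h₁ : 13 / (9 * q) ≤ 13 / 3 := by rw [div_le_iff₀ (by positivity)]; nlinarith
  have h₂ : |2 * (1 - q) * z / (3 * q ^ 2)| ≤ 4 := by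
    rw [abs_div, abs_mul, abs_of_pos (by linarith [q_lt_half] : 0 < 2 * (1 - q)),
      abs_of_pos (by positivity : 0 < 3 * q ^ 2), div_le_iff₀ (by positivity), hz]
    nlinarith
  rw [one_sub_approxInv_mul_mainTerm hy₀.ne' (by rw [← sq_abs, hz]), abs_mul,
    abs_of_nonneg (sq_nonneg y), mul_comm]
  gcongr
  calc _ ≤ |13 / (9 * q)| + |2 * (1 - q) * z / (3 * q ^ 2)| := abs_add_le _ _
    _ ≤ 13 / 3 + 4 := by rw [abs_of_pos (by positivity)]; linarith
    _ ≤ 9 := by norm_num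

theorem abs_approxInv_le {y z : ℝ} (hy₀ : 0 < y) (hy₁ : y ≤ 1) (hz : |z| = y) :
    |approxInv y z| ≤ y⁻¹ := by
  have hq₀ := q_pos
  have hq₁ := one_third_lt_q
  have hq₂ := q_lt_half
  obtain ⟨hz₀, hz₁⟩ := abs_le.mp hz.le
  have h : (1 - q) * y ^ 2 / q ≤ 2 := by rw [div_le_iff₀ hq₀]; nlinarith
  have h' : 0 ≤ (1 - q) * y ^ 2 / q := div_nonneg (by nlinarith) hq₀.le
  calc |approxInv y z| ≤ 5 / (5 * y) := by
        rw [approxInv, abs_div, abs_of_pos (by positivity : 0 < 5 * y)]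
        gcongr
        exact abs_le.mpr ⟨by linarith, by linarith⟩
    _ = y⁻¹ := by field_simp

theorem abs_inv_sub_approxInv_le {T y z K : ℝ} (hy₀ : 0 < y) (hy₁ : y ≤ 1) (hz : |z| = y)
    (hyT : y ≤ T) (hT : |T - mainTerm y z| ≤ K * y ^ 3) :
    |T⁻¹ - approxInv y z| ≤ (9 + K) * y := by
  refine abs_inv_sub_le_of_abs_one_sub_mul_le hy₀ hyT ?_
  have hsplit : 1 - approxInv y z * T
      = (1 - approxInv y z * mainTerm y z) - approxInv y z * (T - mainTerm y z) := by ring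
  calc _ ≤ |1 - approxInv y z * mainTerm y z| + |approxInv y z| * |T - mainTerm y z| := by
        rw [hsplit, ← abs_mul]; exact abs_sub _ _
    _ ≤ 9 * y ^ 2 + y⁻¹ * (K * y ^ 3) := by
        gcongr
        · exact abs_one_sub_approxInv_mul_mainTerm_le hy₀ hy₁ hz
        · exact abs_approxInv_le hy₀ hy₁ hz
    _ = (9 + K) * y ^ 2 := by field_simp

theorem abs_inv_sqTail_sub_approxInv_le {n : ℕ} (hn : n ≠ 0) :
    |(sqTail n)⁻¹ - approxInv (q ^ n) ((-q) ^ n)| ≤ (9 + 80 * (1 - q ^ 3)⁻¹) * q ^ n :=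
  abs_inv_sub_approxInv_le (pow_pos q_pos n) (pow_le_one₀ q_pos.le q_lt_one.le)
    (by rw [abs_pow, abs_neg, abs_of_pos q_pos])
    ((pow_le_one_div_fib_sq hn).trans (one_div_fib_sq_le_sqTail n))
    (abs_sqTail_sub_mainTerm_le n)

end FibReciprocal

open FibReciprocal

theorem fib_reciprocal_square_tail_asymptotic :
    Filter.Tendsto
      (fun n : ℕ =>
        (∑' k : ℕ, (1 : ℝ) / (Nat.fib (n + k) : ℝ) ^ 2)⁻¹ -
          ((Nat.fib n : ℝ) ^ 2 - (Nat.fib (n - 1) : ℝ) ^ 2 + (2 / 3) * (-1 : ℝ) ^ n))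
      Filter.atTop (nhds 0) := by
  have hbound : Tendsto (fun n : ℕ => (9 + 80 * (1 - q ^ 3)⁻¹) * q ^ n) atTop (𝓝 0) := by
    simpa using
      (tendsto_pow_atTop_nhds_zero_of_lt_one q_pos.le q_lt_one).const_mul (9 + 80 * (1 - q ^ 3)⁻¹)
  refine squeeze_zero_norm' ?_ hbound
  filter_upwards [eventually_ne_atTop 0] with n hn
  rw [Real.norm_eq_abs, fib_sq_sub_fib_pred_sq_add_eq_approxInv hn]
  exact abs_inv_sqTail_sub_approxInv_le hn
end

section
/- Let Wₙ = c₁αⁿ − c₂βⁿ with α > 1 > |β|, c₁ > 0 reals, m a positive integer, l ≥ 1−m an integer, d a positive integer. Then lim_{n→∞} (−1)ⁿ·(∑_{k=n}^∞ (−1)^k/W_{mk+l}^d)^{-1} · α^{−d(mn+l)} = c₁^d·(α^{md} + 1)/α^{md}. -/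
/-! With `r = -α^(-md)` and `a = mn + l`, the tail multiplied by `(-1)^n α^(d a)` is
`∑ₖ rᵏ (α^j / W j)^d` at `j = a + mk`. Since `|β| < α`, `W j / α^j → c₁`, so the summands tend
to `rᵏ c₁^(-d)` and are eventually dominated by a multiple of `|r|ᵏ`; by Tannery's theorem the
sum tends to `c₁^(-d) / (1 - r)`, whose inverse is the claimed limit. -/

open Filter Topology

section

variable {𝕜 : Type*} [NormedField 𝕜]

theorem tendsto_zpow_atTop_nhds_zero_of_norm_lt_one {x : 𝕜} (hx : ‖x‖ < 1) :
    Tendsto (fun j : ℤ => x ^ j) atTop (𝓝 0) := by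
  refine squeeze_zero_norm (fun j => (norm_zpow x j).trans_le (Real.rpow_intCast _ j).ge) ?_
  exact (tendsto_rpow_atTop_of_base_lt_one _ (by linarith [norm_nonneg x]) hx).comp
    tendsto_intCast_atTop_atTop

theorem tendsto_mul_zpow_sub_mul_zpow_div_zpow {α β : 𝕜} (c₁ c₂ : 𝕜) (hα : α ≠ 0)
    (hβα : ‖β‖ < ‖α‖) :
    Tendsto (fun j : ℤ => (c₁ * α ^ j - c₂ * β ^ j) / α ^ j) atTop (𝓝 c₁) := by
  have hq : ‖β / α‖ < 1 := by
    rw [norm_div]; exact (div_lt_one (norm_pos_iff.2 hα)).2 hβα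
  have h := ((tendsto_zpow_atTop_nhds_zero_of_norm_lt_one hq).const_mul c₂).const_sub c₁
  rw [mul_zero, sub_zero] at h
  refine h.congr fun j => ?_
  rw [div_zpow, sub_div, mul_div_assoc, mul_div_assoc, div_self (zpow_ne_zero j hα), mul_one]

theorem tendsto_tsum_geometric_mul_shift [CompleteSpace 𝕜] {ι : Type*} {l : Filter ι}
    {f : ℤ → 𝕜} {c r : 𝕜} (hf : Tendsto f atTop (𝓝 c)) (hr : ‖r‖ < 1)
    {a : ι → ℤ} (ha : Tendsto a l atTop) (m : ℕ) :
    Tendsto (fun n => ∑' k : ℕ, r ^ k * f (a n + m * k)) l (𝓝 ((1 - r)⁻¹ * c)) := by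
  obtain ⟨J, hJ⟩ : ∃ J, ∀ j ≥ J, ‖f j‖ ≤ ‖c‖ + 1 :=
    eventually_atTop.1 (hf.norm.eventually_le_const (lt_add_one _))
  have h := tendsto_tsum_of_dominated_convergence (f := fun n (k : ℕ) => r ^ k * f (a n + m * k))
    (g := fun k : ℕ => r ^ k * c) (bound := fun k => (‖c‖ + 1) * ‖r‖ ^ k)
    ((summable_geometric_of_lt_one (norm_nonneg _) hr).mul_left _)
    (fun k => tendsto_const_nhds.mul (hf.comp (tendsto_atTop_add_const_right _ _ ha))) ?_
  · rwa [tsum_mul_right, tsum_geometric_of_norm_lt_one hr] at h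
  filter_upwards [ha.eventually_ge_atTop J] with n hn k
  rw [norm_mul, norm_pow, mul_comm]
  gcongr
  exact hJ _ (hn.trans (le_add_of_nonneg_right (by positivity)))

theorem neg_one_pow_add_div_pow_eq {α : 𝕜} (hα : α ≠ 0) (w : 𝕜) (a : ℤ) (m d n k : ℕ) :
    (-1) ^ (n + k) / w ^ d
      = (-1) ^ n * α ^ (-(d : ℤ) * a) * ((-(α ^ (m * d))⁻¹) ^ k * (α ^ (a + m * k) / w) ^ d) := by
  have hpow : (α ^ (a + m * k)) ^ d = α ^ ((d : ℤ) * a) * (α ^ (m * d)) ^ k := by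
    rw [← zpow_natCast (α ^ _) d, ← zpow_natCast α (m * d), ← zpow_natCast (α ^ _) k,
      ← zpow_mul, ← zpow_mul, ← zpow_add₀ hα]
    push_cast; ring_nf
  rw [div_pow, hpow, neg_pow (α ^ (m * d))⁻¹, inv_pow, pow_add, neg_mul, zpow_neg]
  field_simp

end

theorem horadam_alternating_tail_inverse_leading_order_general
    (α β c₁ c₂ : ℝ) (hα : 1 < α) (hβ : |β| < 1) (hc₁ : 0 < c₁)
    (m : ℕ) (hm : 0 < m) (l : ℤ) (d : ℕ) (hd : 0 < d)
    (W : ℤ → ℝ) (hW : ∀ n : ℤ, W n = c₁ * α ^ n - c₂ * β ^ n) :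
    Filter.Tendsto
      (fun n : ℕ =>
        (-1 : ℝ) ^ n *
          (∑' k : ℕ, (-1 : ℝ) ^ (n + k) / (W ((m : ℤ) * ((n : ℤ) + (k : ℤ)) + l)) ^ d)⁻¹ *
          α ^ (-(d : ℤ) * ((m : ℤ) * (n : ℤ) + l)))
      Filter.atTop (nhds (c₁ ^ d * (α ^ (m * d) + 1) / α ^ (m * d))) := by
  have hα₀ : 0 < α := zero_lt_one.trans hα
  set r : ℝ := -(α ^ (m * d))⁻¹
  have hr : ‖r‖ < 1 := by
    rw [norm_neg, norm_inv, Real.norm_of_nonneg (by positivity)]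
    exact inv_lt_one_of_one_lt₀ (one_lt_pow₀ hα (by positivity))
  have hβα : ‖β‖ < ‖α‖ := by
    rw [Real.norm_eq_abs, Real.norm_of_nonneg hα₀.le]; linarith
  have hf : Tendsto (fun j : ℤ => (α ^ j / W j) ^ d) atTop (𝓝 (c₁⁻¹ ^ d)) := by
    simpa only [hW, inv_div] using
      ((tendsto_mul_zpow_sub_mul_zpow_div_zpow c₁ c₂ hα₀.ne' hβα).inv₀ hc₁.ne').pow d
  have ha : Tendsto (fun n : ℕ => (m : ℤ) * n + l) atTop atTop :=
    tendsto_atTop_add_const_right _ l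
      (tendsto_natCast_atTop_atTop.const_mul_atTop' (Int.natCast_pos.2 hm))
  have htail : ∀ n : ℕ, ∑' k : ℕ, (-1 : ℝ) ^ (n + k) / W (m * (n + k) + l) ^ d
      = (-1) ^ n * α ^ (-(d : ℤ) * (m * n + l)) *
        ∑' k : ℕ, r ^ k * (α ^ (m * n + l + m * k) / W (m * n + l + m * k)) ^ d := by
    intro n
    rw [← tsum_mul_left]
    congr 1 with k
    rw [← neg_one_pow_add_div_pow_eq hα₀.ne']
    ring_nf
  have hr₁ : 1 - r ≠ 0 := sub_ne_zero.2 fun h => by simp [← h] at hr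
  have hlim := (tendsto_tsum_geometric_mul_shift hf hr ha m).inv₀
    (mul_ne_zero (inv_ne_zero hr₁) (by positivity))
  rw [show ((1 - r)⁻¹ * c₁⁻¹ ^ d)⁻¹ = c₁ ^ d * (α ^ (m * d) + 1) / α ^ (m * d) by
    simp only [r]; rw [inv_pow]; field_simp; ring] at hlim
  refine hlim.congr fun n => ?_
  rw [htail, mul_inv, mul_inv]
  field_simp

theorem horadam_alternating_tail_inverse_leading_order
    (α β c₁ c₂ : ℝ) (hα : 1 < α) (hβ : |β| < 1) (hc₁ : 0 < c₁)
    (m : ℕ) (hm : 0 < m) (l : ℤ) (hl : 1 - (m : ℤ) ≤ l) (d : ℕ) (hd : 0 < d)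
    (W : ℤ → ℝ) (hW : ∀ n : ℤ, W n = c₁ * α ^ n - c₂ * β ^ n) :
    Filter.Tendsto
      (fun n : ℕ =>
        (-1 : ℝ) ^ n *
          (∑' k : ℕ, (-1 : ℝ) ^ (n + k) / (W ((m : ℤ) * ((n : ℤ) + (k : ℤ)) + l)) ^ d)⁻¹ *
          α ^ (-(d : ℤ) * ((m : ℤ) * (n : ℤ) + l)))
      Filter.atTop (nhds (c₁ ^ d * (α ^ (m * d) + 1) / α ^ (m * d))) :=
  horadam_alternating_tail_inverse_leading_order_general α β c₁ c₂ hα hβ hc₁ m hm l d hd W hW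
end
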